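/- There is no Hermitian operator W on ℂ^2 ⊗ ℂ^2 with Tr(W σ) ≥ 0 for all separable states σ such that Tr(W |φ₁⟩⟨φ₁|) < 0 and Tr(W |φ₂⟩⟨φ₂|) < 0 for two distinct Bell states |φ₁⟩, |φ₂⟩ (e.g. |φ⁺⟩ and |φ⁻⟩). -/
import Mathlib


open Matrix ComplexOrder

/-- The pure product state `|a⟩⟨a| ⊗ |b⟩⟨b|` as a matrix on `ℂ^d ⊗ ℂ^d`. -/
noncomputable def prodState {d : ℕ} (a b : Fin d → ℂ) :
    Matrix (Fin d × Fin d) (Fin d × Fin d) ℂ :=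
  fun p q => a p.1 * star (a q.1) * (b p.2 * star (b q.2))

/-- A separable state: a convex combination of pure product states. -/
noncomputable def Separable {d : ℕ}
    (ρ : Matrix (Fin d × Fin d) (Fin d × Fin d) ℂ) : Prop :=
  ∃ (n : ℕ) (p : Fin n → ℝ) (a b : Fin n → Fin d → ℂ),
    (∀ k, 0 ≤ p k) ∧ ∑ k, p k = 1 ∧
    ρ = ∑ k, (p k : ℂ) • prodState (a k) (b k)

/-- Rank-one projector `|v⟩⟨v|`. -/
noncomputable def outer {n : Type*} (v : n → ℂ) : Matrix n n ℂ :=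
  fun p q => v p * star (v q)

/-- Bell state `|φ⁺⟩ = (|00⟩ + |11⟩)/√2`. -/
noncomputable def phiP : Fin 2 × Fin 2 → ℂ :=
  fun q => if q = (0, 0) then (Real.sqrt 2)⁻¹ else if q = (1, 1) then (Real.sqrt 2)⁻¹ else 0

/-- Bell state `|φ⁻⟩ = (|00⟩ − |11⟩)/√2`. -/
noncomputable def phiM : Fin 2 × Fin 2 → ℂ :=
  fun q => if q = (0, 0) then (Real.sqrt 2)⁻¹ else if q = (1, 1) then -(Real.sqrt 2)⁻¹ else 0

/-- Bell state `|ψ⁺⟩ = (|01⟩ + |10⟩)/√2`. -/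
noncomputable def psiP : Fin 2 × Fin 2 → ℂ :=
  fun q => if q = (0, 1) then (Real.sqrt 2)⁻¹ else if q = (1, 0) then (Real.sqrt 2)⁻¹ else 0

/-- Bell state `|ψ⁻⟩ = (|01⟩ − |10⟩)/√2`. -/
noncomputable def psiM : Fin 2 × Fin 2 → ℂ :=
  fun q => if q = (0, 1) then (Real.sqrt 2)⁻¹ else if q = (1, 0) then -(Real.sqrt 2)⁻¹ else 0

theorem stmt6 :
    ¬ ∃ W : Matrix (Fin 2 × Fin 2) (Fin 2 × Fin 2) ℂ,
      W.IsHermitian ∧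
      (∀ σ : Matrix (Fin 2 × Fin 2) (Fin 2 × Fin 2) ℂ,
        Separable σ → 0 ≤ ((W * σ).trace).re) ∧
      ((W * outer phiP).trace).re < 0 ∧
      ((W * outer phiM).trace).re < 0 := by
  rintro ⟨W, -, hsep, h1, h2⟩
  set σ : Matrix (Fin 2 × Fin 2) (Fin 2 × Fin 2) ℂ :=
    (1/2 : ℂ) • outer phiP + (1/2 : ℂ) • outer phiM with hσ
  have hSep : Separable σ := by
    refine ⟨2, ![1/2, 1/2], ![![1,0], ![0,1]], ![![1,0], ![0,1]], ?_, by norm_num [Fin.sum_univ_two], ?_⟩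
    · intro k; fin_cases k <;> norm_num
    · have hsR : (Real.sqrt 2)⁻¹ * (Real.sqrt 2)⁻¹ = (1/2 : ℝ) := by
        rw [← mul_inv, Real.mul_self_sqrt (by norm_num : (0:ℝ) ≤ 2)]
        norm_num
      have hs : (((Real.sqrt 2)⁻¹ : ℝ) : ℂ) * (((Real.sqrt 2)⁻¹ : ℝ) : ℂ) = 1/2 := by
        rw [← Complex.ofReal_mul, hsR]; norm_num
      have hs' : ((Real.sqrt 2 : ℝ) : ℂ)⁻¹ * ((Real.sqrt 2 : ℝ) : ℂ)⁻¹ = 1/2 := by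
        push_cast at hs; exact hs
      ext ⟨i,j⟩ ⟨k,l⟩
      fin_cases i <;> fin_cases j <;> fin_cases k <;> fin_cases l <;>
        simp [hσ, prodState, outer, phiP, phiM, Fin.sum_univ_two, Matrix.add_apply,
          Matrix.smul_apply, smul_eq_mul] <;> norm_num [hs, hs']
  have h0 := hsep σ hSep
  have htr : (W * σ).trace = (1/2 : ℂ) * (W * outer phiP).trace + (1/2 : ℂ) * (W * outer phiM).trace := by
    rw [hσ, Matrix.mul_add, Matrix.mul_smul, Matrix.mul_smul, Matrix.trace_add,
      Matrix.trace_smul, Matrix.trace_smul]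
    simp [smul_eq_mul]
  rw [htr] at h0
  simp only [Complex.add_re, Complex.mul_re] at h0
  norm_num at h0
  linarith
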